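/- Let u be a spectrally extremal vertex of X and suppose u and v are strongly cospectral with u ≠ v. If d(u,v) < ε_u, then v is a cut-vertex of X, i.e., deleting v disconnects X. -/

import Mathlib

open Matrix Finset Polynomial

variable {V : Type*}

/-- The eccentricity of a vertex: maximum graph distance to any vertex. -/
noncomputable def ecc [Fintype V] (X : SimpleGraph V) (u : V) : ℕ :=
  Finset.univ.sup fun w => X.dist u w

/-- The standard basis vector of a vertex. -/
def eVec [DecidableEq V] (u : V) : V → ℝ := Pi.single u 1

/-- `SpectralDecomp X d θ E` : `θ 0 > θ 1 > ... > θ d` are the distinct eigenvalues of the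
adjacency matrix of `X` and `E r` is the orthogonal projection onto the `θ r`-eigenspace. -/
structure SpectralDecomp [Fintype V] [DecidableEq V] (X : SimpleGraph V) [DecidableRel X.Adj]
    (d : ℕ) (θ : Fin (d + 1) → ℝ) (E : Fin (d + 1) → Matrix V V ℝ) : Prop where
  decomp : X.adjMatrix ℝ = ∑ r, θ r • E r
  sum_eq_one : ∑ r, E r = 1
  orth : ∀ r s, E r * E s = if r = s then E r else 0
  symm : ∀ r, (E r)ᵀ = E r
  strict_anti : ∀ r s : Fin (d + 1), r < s → θ s < θ r
  proj_ne_zero : ∀ r, E r ≠ 0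

open scoped Classical in
/-- The (index set of the) eigenvalue support of a vertex `u`:
those `r` with `E r * e_u ≠ 0`. -/
noncomputable def suppIdx [Fintype V] [DecidableEq V] {d : ℕ}
    (E : Fin (d + 1) → Matrix V V ℝ) (u : V) : Finset (Fin (d + 1)) :=
  Finset.univ.filter fun r => E r *ᵥ eVec u ≠ 0

/-- The dual degree `d*(u) = |Φ_u| - 1`. -/
noncomputable def dualDeg [Fintype V] [DecidableEq V] {d : ℕ}
    (E : Fin (d + 1) → Matrix V V ℝ) (u : V) : ℕ :=
  (suppIdx E u).card - 1

/-- A vertex is spectrally extremal if its eccentricity equals its dual degree. -/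
noncomputable def SpectrallyExtremal [Fintype V] [DecidableEq V] (X : SimpleGraph V) {d : ℕ}
    (E : Fin (d + 1) → Matrix V V ℝ) (u : V) : Prop :=
  ecc X u = dualDeg E u

/-- Vertices are cospectral if the diagonal entries of all spectral projections agree. -/
def Cospectral [Fintype V] [DecidableEq V] {d : ℕ}
    (E : Fin (d + 1) → Matrix V V ℝ) (u v : V) : Prop :=
  ∀ r, E r u u = E r v v

/-- Vertices are strongly cospectral if `E r e_u = ± E r e_v` for every `r`. -/
def StronglyCospectral [Fintype V] [DecidableEq V] {d : ℕ}
    (E : Fin (d + 1) → Matrix V V ℝ) (u v : V) : Prop :=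
  ∀ r, E r *ᵥ eVec v = E r *ᵥ eVec u ∨ E r *ᵥ eVec v = -(E r *ᵥ eVec u)

/-- `u` and `v` are antipodal vertices: they are cospectral, the distance partition of `u`
coincides with that of `v`, it is pseudo equitable (with respect to a positive Perron
eigenvector), and `{u}`, `{v}` are singleton classes at maximum distance from each other. -/
noncomputable def Antipodal [Fintype V] [DecidableEq V] (X : SimpleGraph V) [DecidableRel X.Adj]
    {d : ℕ} (θ : Fin (d + 1) → ℝ) (E : Fin (d + 1) → Matrix V V ℝ) (u v : V) : Prop :=
  Cospectral E u v ∧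
  -- the two distance partitions have the same classes
  (∀ i : ℕ, i ≤ ecc X u → ∃ j : ℕ, ∀ w, X.dist u w = i ↔ X.dist v w = j) ∧
  (∀ j : ℕ, j ≤ ecc X v → ∃ i : ℕ, ∀ w, X.dist u w = i ↔ X.dist v w = j) ∧
  -- `{u}` and `{v}` are singletons at maximum distance from each other
  X.dist u v = ecc X u ∧ X.dist u v = ecc X v ∧
  (∀ w, X.dist u w = X.dist u v → w = v) ∧
  (∀ w, X.dist v w = X.dist u v → w = u) ∧
  -- the partition is pseudo equitable with respect to a positive eigenvector
  -- for the largest eigenvalue `θ 0`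
  ∃ x : V → ℝ, (∀ w, 0 < x w) ∧ X.adjMatrix ℝ *ᵥ x = θ 0 • x ∧
    ∀ i : ℕ, ∀ w₁ w₂ : V, X.dist u w₁ = X.dist u w₂ →
      ∑ c ∈ Finset.univ.filter (fun c => X.dist u c = i),
          (X.adjMatrix ℝ) w₁ c * x c / x w₁
        = ∑ c ∈ Finset.univ.filter (fun c => X.dist u c = i),
          (X.adjMatrix ℝ) w₂ c * x c / x w₂

/-- Perfect state transfer from `u` to `v` at time `t`:
`|(exp (i t A))_{v,u}| = 1`. -/
noncomputable def PST [Fintype V] [DecidableEq V] (X : SimpleGraph V) [DecidableRel X.Adj]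
    (u v : V) (t : ℝ) : Prop :=
  ‖(NormedSpace.exp ((Complex.I * (t : ℂ)) • X.adjMatrix ℂ)) v u‖ = 1

/-- `X` is distance-regular: there are intersection numbers `a i`, `b i`, `c i` such that
any vertex `w` at distance `i` from `u` has exactly `c i` neighbours at distance `i - 1`
from `u`, `a i` neighbours at distance `i`, and `b i` neighbours at distance `i + 1`. -/
noncomputable def IsDistanceRegular [Fintype V] (X : SimpleGraph V) [DecidableRel X.Adj] :
    Prop :=
  ∃ a b c : ℕ → ℕ, ∀ (i : ℕ) (u w : V), X.dist u w = i →
    (Finset.univ.filter (fun z => X.Adj w z ∧ X.dist u z + 1 = i)).card = c i ∧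
    (Finset.univ.filter (fun z => X.Adj w z ∧ X.dist u z = i)).card = a i ∧
    (Finset.univ.filter (fun z => X.Adj w z ∧ X.dist u z = i + 1)).card = b i

/-!
Strong cospectrality gives signs `σ r = ±1` with `E r e_v = σ r • E r e_u`; interpolating them
on the eigenvalue support of `u` yields a polynomial `p` of degree at most `d*(u) = ε_u` with
`p(A) e_u = e_v`. Since `(A ^ j) w u` vanishes for `j < d(u, w)` and is positive for
`j = d(u, w)`, reading this identity at vertices at distance `ε_u, ε_u - 1, …, d(u, v) + 1` from `u`
kills the coefficients of `p` above `d(u, v)`. The coefficient at `d(u, v)` is then nonzero, so `v`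
is the only vertex at distance `d(u, v)` from `u`, and every walk from `u` to a vertex at distance
`ε_u > d(u, v)` passes through `v`.
-/

namespace SimpleGraph

variable {α : Type*} {X : SimpleGraph V}

lemma Walk.exists_mem_support_dist_eq (u : V) {k : ℕ} {a b : V} (W : X.Walk a b)
    (ha : X.dist u a ≤ k) (hb : k ≤ X.dist u b) : ∃ z ∈ W.support, X.dist u z = k := by
  induction W with
  | nil => exact ⟨_, by simp, le_antisymm ha hb⟩
  | @cons a c b h W ih =>
    by_cases hc : X.dist u c ≤ k
    · obtain ⟨z, hz, hzk⟩ := ih hc hb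
      exact ⟨z, by simp [hz], hzk⟩
    · refine ⟨a, by simp, le_antisymm ha ?_⟩
      rcases h.diff_dist_adj (u := u) with h' | h' | h' <;> omega

section Fintype

variable [Fintype V]

lemma exists_dist_eq_ecc (X : SimpleGraph V) (u : V) : ∃ w, X.dist u w = ecc X u := by
  obtain ⟨w, -, hw⟩ := Finset.exists_mem_eq_sup Finset.univ ⟨u, Finset.mem_univ u⟩
    fun w => X.dist u w
  exact ⟨w, hw.symm⟩

lemma exists_dist_eq_of_le_ecc {u : V} {j : ℕ} (hj : j ≤ ecc X u) : ∃ w, X.dist u w = j := by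
  rcases Nat.eq_zero_or_pos j with rfl | hpos
  · exact ⟨u, dist_self⟩
  obtain ⟨w, hw⟩ := exists_dist_eq_ecc X u
  obtain ⟨W, -⟩ := exists_walk_of_dist_ne_zero (G := X) (u := u) (v := w) (by omega)
  obtain ⟨z, -, hz⟩ := W.exists_mem_support_dist_eq u (by simp) (hw ▸ hj)
  exact ⟨z, hz⟩

variable [DecidableEq V] [DecidableRel X.Adj]

lemma adjMatrix_pow_apply_eq_zero_of_lt_dist [Semiring α] {n : ℕ} {u v : V}
    (hn : n < X.dist u v) : (X.adjMatrix α ^ n) u v = 0 := by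
  have : IsEmpty {W : X.Walk u v | W.length = n} := ⟨fun ⟨W, hW⟩ => (dist_le W).not_gt (hW ▸ hn)⟩
  rw [adjMatrix_pow_apply_eq_card_walk, Fintype.card_eq_zero, Nat.cast_zero]

lemma Reachable.adjMatrix_pow_dist_apply_ne_zero [Semiring α] [CharZero α] {u v : V}
    (h : X.Reachable u v) : (X.adjMatrix α ^ X.dist u v) u v ≠ 0 := by
  rw [adjMatrix_pow_apply_eq_card_walk, Nat.cast_ne_zero, ← Nat.pos_iff_ne_zero,
    Fintype.card_pos_iff]
  obtain ⟨W, hW⟩ := h.exists_walk_length_eq_dist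
  exact ⟨⟨W, hW⟩⟩

lemma aeval_adjMatrix_apply_of_coeff_eq_zero [CommSemiring α] {p : α[X]} {u v : V}
    (hp : ∀ i, X.dist u v < i → p.coeff i = 0) :
    aeval (X.adjMatrix α) p u v = p.coeff (X.dist u v) * (X.adjMatrix α ^ X.dist u v) u v := by
  have hdeg : p.natDegree < X.dist u v + 1 :=
    Nat.lt_succ_of_le <| natDegree_le_iff_coeff_eq_zero.mpr fun i hi => hp i (by exact_mod_cast hi)
  have hshort : ∑ i ∈ Finset.range (X.dist u v), (p.coeff i • X.adjMatrix α ^ i) u v = 0 :=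
    Finset.sum_eq_zero fun i hi => by
      rw [Matrix.smul_apply, adjMatrix_pow_apply_eq_zero_of_lt_dist (Finset.mem_range.mp hi),
        smul_zero]
  rw [aeval_eq_sum_range' hdeg, Finset.sum_range_succ, Matrix.add_apply, Matrix.sum_apply, hshort,
    zero_add, Matrix.smul_apply, smul_eq_mul]

lemma Connected.eq_of_dist_eq_of_aeval_mulVec_single [CommRing α] [NoZeroDivisors α] [CharZero α]
    (hconn : X.Connected) {p : α[X]} {u v z : V} (hdeg : p.natDegree ≤ ecc X u)
    (hp : aeval (X.adjMatrix α) p *ᵥ Pi.single u 1 = Pi.single v 1)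
    (hz : X.dist u z = X.dist u v) : z = v := by
  have entry (w : V) : aeval (X.adjMatrix α) p w u = (Pi.single v 1 : V → α) w := by
    rw [← hp, Matrix.mulVec_single_one, Matrix.col_apply]
  have entry_of_coeff {w : V} (hw : ∀ i, X.dist u w < i → p.coeff i = 0) :
      (Pi.single v 1 : V → α) w = p.coeff (X.dist u w) * (X.adjMatrix α ^ X.dist w u) w u := by
    rw [← entry, aeval_adjMatrix_apply_of_coeff_eq_zero (by rwa [dist_comm]), dist_comm]
  -- downward induction on `i`; above `ecc X u` the coefficients vanish since `deg p ≤ ecc X u`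
  have hvanish : ∀ i, X.dist u v < i → p.coeff i = 0 := by
    suffices ∀ n i, X.dist u v < i → ecc X u < i + n → p.coeff i = 0 from
      fun i hi => this (ecc X u + 1) i hi (by omega)
    intro n
    induction n with
    | zero => exact fun i _ hi => coeff_eq_zero_of_natDegree_lt (by omega)
    | succ n ih =>
      intro i hvi hi
      by_cases hie : ecc X u < i
      · exact coeff_eq_zero_of_natDegree_lt (by omega)
      obtain ⟨w, hw⟩ := exists_dist_eq_of_le_ecc (X := X) (u := u) (not_lt.mp hie)
      have hwv : w ≠ v := by rintro rfl; omega
      have h := entry_of_coeff (w := w) fun i' hi' => ih i' (by omega) (by omega)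
      rw [Pi.single_eq_of_ne hwv, eq_comm] at h
      rw [← hw]
      exact (mul_eq_zero.mp h).resolve_right (hconn w u).adjMatrix_pow_dist_apply_ne_zero
  have hv := entry_of_coeff (w := v) hvanish
  rw [Pi.single_eq_same] at hv
  by_contra hzv
  have hz' := entry_of_coeff (w := z) (hz ▸ hvanish)
  rw [Pi.single_eq_of_ne hzv, hz, eq_comm] at hz'
  have hcoeff : p.coeff (X.dist u v) ≠ 0 := left_ne_zero_of_mul (by rw [← hv]; exact one_ne_zero)
  exact mul_ne_zero hcoeff (hconn z u).adjMatrix_pow_dist_apply_ne_zero hz'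

end Fintype

lemma not_connected_induce_ne_of_forall_dist_eq {u v w : V} (huv : u ≠ v)
    (hw : X.dist u v < X.dist u w) (huniq : ∀ z, X.dist u z = X.dist u v → z = v) :
    ¬ (X.induce {z | z ≠ v}).Connected := by
  intro hcon
  have hwv : w ≠ v := by rintro rfl; omega
  obtain ⟨W⟩ := hcon.preconnected ⟨u, huv⟩ ⟨w, hwv⟩
  obtain ⟨z, hzW, hz⟩ := (W.map (Embedding.induce {z | z ≠ v}).toHom).exists_mem_support_dist_eq u
    (by simp) hw.le
  rw [Walk.support_map, List.mem_map] at hzW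
  obtain ⟨y, -, rfl⟩ := hzW
  exact y.prop (huniq _ hz)

end SimpleGraph

section Spectral

variable [Fintype V] [DecidableEq V] {X : SimpleGraph V} [DecidableRel X.Adj] {d : ℕ}
  {θ : Fin (d + 1) → ℝ} {E : Fin (d + 1) → Matrix V V ℝ}

namespace SpectralDecomp

lemma adjMatrix_pow (hspec : SpectralDecomp X d θ E) (j : ℕ) :
    X.adjMatrix ℝ ^ j = ∑ r, θ r ^ j • E r := by
  induction j with
  | zero => simpa using hspec.sum_eq_one.symm
  | succ j ih =>
    rw [pow_succ, ih, hspec.decomp, Finset.sum_mul_sum]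
    refine Finset.sum_congr rfl fun r _ => ?_
    simp [hspec.orth, smul_smul, pow_succ']

lemma aeval_adjMatrix (hspec : SpectralDecomp X d θ E) (p : ℝ[X]) :
    aeval (X.adjMatrix ℝ) p = ∑ r, p.eval (θ r) • E r := by
  simp_rw [aeval_eq_sum_range, hspec.adjMatrix_pow, Finset.smul_sum, smul_smul,
    eval_eq_sum_range, Finset.sum_smul]
  exact Finset.sum_comm

lemma sum_mulVec (hspec : SpectralDecomp X d θ E) (x : V → ℝ) : ∑ r, E r *ᵥ x = x := by
  rw [← Matrix.sum_mulVec, hspec.sum_eq_one, Matrix.one_mulVec]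

end SpectralDecomp

lemma StronglyCospectral.exists_aeval_adjMatrix_mulVec_eq {u v : V}
    (hsc : StronglyCospectral E u v) (hspec : SpectralDecomp X d θ E) :
    ∃ p : ℝ[X], p.natDegree ≤ dualDeg E u ∧ aeval (X.adjMatrix ℝ) p *ᵥ eVec u = eVec v := by
  have hsign (r : Fin (d + 1)) : ∃ s : ℝ, E r *ᵥ eVec v = s • (E r *ᵥ eVec u) :=
    (hsc r).elim (fun h => ⟨1, by rw [h, one_smul]⟩) fun h => ⟨-1, by rw [h, neg_one_smul]⟩
  choose σ hσ using hsign
  have hinj : Set.InjOn θ (suppIdx E u) := (show StrictAnti θ from hspec.strict_anti).injective.injOn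
  refine ⟨Lagrange.interpolate (suppIdx E u) θ σ,
    natDegree_le_of_degree_le (Lagrange.degree_interpolate_le _ hinj), ?_⟩
  rw [hspec.aeval_adjMatrix, Matrix.sum_mulVec, ← hspec.sum_mulVec (eVec v)]
  refine Finset.sum_congr rfl fun r _ => ?_
  rw [Matrix.smul_mulVec, hσ r]
  by_cases hr : r ∈ suppIdx E u
  · rw [Lagrange.eval_interpolate_at_node σ hinj hr]
  · have hEu : E r *ᵥ eVec u = 0 := by simpa [suppIdx] using hr
    rw [hEu, smul_zero, smul_zero]

end Spectral

variable [Fintype V] [DecidableEq V]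

/-- If `u` is spectrally extremal, `u ≠ v` are strongly cospectral and
`d(u,v) < ε_u`, then `v` is a cut-vertex: deleting `v` disconnects `X`. -/
theorem stmt_8 (X : SimpleGraph V) [DecidableRel X.Adj] (hconn : X.Connected)
    {d : ℕ} (θ : Fin (d + 1) → ℝ) (E : Fin (d + 1) → Matrix V V ℝ)
    (hspec : SpectralDecomp X d θ E) (u v : V)
    (hext : SpectrallyExtremal X E u) (hsc : StronglyCospectral E u v)
    (hne : u ≠ v) (hdist : X.dist u v < ecc X u) :
    ¬ (X.induce {w : V | w ≠ v}).Connected := by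
  obtain ⟨p, hdeg, hp⟩ := hsc.exists_aeval_adjMatrix_mulVec_eq hspec
  obtain ⟨w, hw⟩ := X.exists_dist_eq_ecc u
  exact SimpleGraph.not_connected_induce_ne_of_forall_dist_eq hne (hw ▸ hdist)
    fun z hz => hconn.eq_of_dist_eq_of_aeval_mulVec_single (hext ▸ hdeg) hp hz
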